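/- arXiv:2512.09624 — 3 statements merged into one kernel-verified Lean document; each statement's English description precedes it below -/
import Mathlib

section
/- Let a,b,c be real numbers with b ≠ 0, and suppose there is K > 1 with |ac| = 1/K and |a| > 1. Let 0 < ε < min{(|a|−1)/|b|, (a²K−1)/(|a||b|K)}. Then for every (w₁,w₂)∈ℝ² with |w₂| ≤ ε|w₁| one has |c·w₂| ≤ ε·|a·w₁ + b·w₂|; that is, the linear map (w₁,w₂) ↦ (a w₁ + b w₂, c w₂) maps the cone {(w₁,w₂) : |w₂| ≤ ε|w₁|} into itself. -/
/-- (Linear-algebra core of the cone-invariance lemma.) Let `a, b, c` be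
real numbers with `b ≠ 0`, and suppose there is `K > 1` with `|ac| = 1/K` and `|a| > 1`.
Let `0 < ε < min{(|a|-1)/|b|, (a²K-1)/(|a||b|K)}`. Then the upper-triangular linear map
`(w₁, w₂) ↦ (a w₁ + b w₂, c w₂)` maps the cone `{(w₁,w₂) : |w₂| ≤ ε |w₁|}` into itself:
`|c w₂| ≤ ε |a w₁ + b w₂|` whenever `|w₂| ≤ ε |w₁|`. -/
theorem cone_invariance_linear (a b c K ε : ℝ) (hb : b ≠ 0) (hK : 1 < K)
    (hac : |a * c| = 1 / K) (ha : 1 < |a|) (hε0 : 0 < ε)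
    (hε : ε < min ((|a| - 1) / |b|) ((a ^ 2 * K - 1) / (|a| * |b| * K))) :
    ∀ w₁ w₂ : ℝ, |w₂| ≤ ε * |w₁| → |c * w₂| ≤ ε * |a * w₁ + b * w₂| := by
  intro w₁ w₂ hw
  have hb' : 0 < |b| := abs_pos.mpr hb
  have hK0 : 0 < K := lt_trans one_pos hK
  have ha0 : 0 < |a| := lt_trans one_pos ha
  have hε2 : ε < (a ^ 2 * K - 1) / (|a| * |b| * K) := lt_of_lt_of_le hε (min_le_right _ _)
  have hε2' : ε * (|a| * |b| * K) < a ^ 2 * K - 1 :=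
    (lt_div_iff₀ (by positivity)).mp hε2
  have hasq : a ^ 2 = |a| ^ 2 := (sq_abs a).symm
  -- |c| = 1/(K|a|)
  have hac' : |a| * |c| = 1 / K := by rwa [abs_mul] at hac
  -- |c| ≤ |a| - ε|b|
  have hc : |c| ≤ |a| - ε * |b| := by
    have h1 : |a| * |c| * K = 1 := by
      rw [hac']; field_simp
    rw [hasq] at hε2'
    nlinarith [abs_nonneg c, mul_pos ha0 hK0]
  -- reverse triangle inequality
  have htri : |a| * |w₁| - |b| * |w₂| ≤ |a * w₁ + b * w₂| := by
    have := abs_sub_abs_le_abs_sub (a * w₁) (-(b * w₂))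
    rw [sub_neg_eq_add, abs_neg, abs_mul, abs_mul] at this
    linarith
  rw [abs_mul]
  nlinarith [abs_nonneg w₂, abs_nonneg c, abs_nonneg w₁,
    mul_le_mul_of_nonneg_left hw (abs_nonneg c)]
end

section
/- Let X be a compact metric space, T:X→X continuous, (n_k) a strictly increasing sequence of natural numbers, and F⊆ℕ a Fölner set along (n_k) whose lower asymptotic density along (n_k) is positive. Then for any family (μ_{n_k})_k of Borel probability measures on X, every weak* cluster point of the sequence μ_{n_k}^{F_{n_k}} := (1/#F_{n_k}) Σ_{j∈F_{n_k}} T^j_* μ_{n_k} is a T-invariant Borel probability measure. -/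
open MeasureTheory Filter Topology Set
open scoped ENNReal NNReal Classical

noncomputable section


/-- `E ∩ {0, …, n-1}` as a finset. -/
def sec (E : Set ℕ) (n : ℕ) : Finset ℕ := (Finset.range n).filter (· ∈ E)

/-- `#(E ∩ {0, …, n-1})`. -/
def secCard (E : Set ℕ) (n : ℕ) : ℕ := (sec E n).card

/-- The boundary `∂E` of a set of integers: the points of `E` one of whose neighbours
(in `ℤ`) lies outside of `E`. -/
def bdry (E : Set ℕ) : Set ℕ := {k | k ∈ E ∧ ((k + 1) ∉ E ∨ k = 0 ∨ (k - 1) ∉ E)}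

/-- The upper asymptotic density of `E` along the subsequence `(n_k)`. -/
def upDensAlong (E : Set ℕ) (nk : ℕ → ℕ) : ℝ :=
  Filter.limsup (fun k => (secCard E (nk k) : ℝ) / (nk k : ℝ)) Filter.atTop

/-- The lower asymptotic density of `E` along the subsequence `(n_k)`. -/
def loDensAlong (E : Set ℕ) (nk : ℕ → ℕ) : ℝ :=
  Filter.liminf (fun k => (secCard E (nk k) : ℝ) / (nk k : ℝ)) Filter.atTop

/-- The upper asymptotic density of `E`. -/
def upDens (E : Set ℕ) : ℝ :=
  Filter.limsup (fun n => (secCard E n : ℝ) / (n : ℝ)) Filter.atTop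

/-- `F` is Fölner along `(n_k)`: its boundary has zero upper asymptotic density along
`(n_k)`. -/
def FolnerAlong (F : Set ℕ) (nk : ℕ → ℕ) : Prop := upDensAlong (bdry F) nk = 0

/-- `Fill^N(E)`: the union of all integer intervals `[a, b)` with `a, b ∈ E` and
`0 < b - a ≤ N`. -/
def fill (N : ℕ) (E : Set ℕ) : Set ℕ :=
  {k | ∃ a ∈ E, ∃ b ∈ E, a ≤ k ∧ k < b ∧ a < b ∧ b - a ≤ N}

/-- The averaged push-forward measure `μ^{F_n} = (1/#F_n) ∑_{j ∈ F_n} T^j_* μ`. -/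
def avgMeas {X : Type*} [MeasurableSpace X] (T : X → X) (F : Set ℕ) (μ : Measure X)
    (n : ℕ) : Measure X :=
  ((secCard F n : ℝ≥0∞))⁻¹ • ∑ j ∈ sec F n, Measure.map (T^[j]) μ

/-- `ν` is a weak* cluster point of the sequence of measures `s`, i.e. the weak* limit of
a subsequence. -/
def WeakClusterPt {X : Type*} [MeasurableSpace X] [TopologicalSpace X]
    (ν : Measure X) (s : ℕ → Measure X) : Prop :=
  ∃ φ : ℕ → ℕ, StrictMono φ ∧
    ∀ g : C(X, ℝ), Tendsto (fun k => ∫ x, g x ∂(s (φ k))) atTop (𝓝 (∫ x, g x ∂ν))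

/-!
Pushing the average `μ^{F_n}` forward by `T` shifts the index set `F_n` by one, so for a bounded
continuous `g` the difference `∫ g ∘ T - ∫ g` against `μ^{F_n}` is a sum of terms bounded by `‖g‖`
over the symmetric difference of `F_n` and `F_n + 1`, divided by `#F_n`. Both halves of that
symmetric difference have the same size and every point of `F_n \ (F_n + 1)` lies in `∂F`, so the
error is at most `2 ‖g‖ #(∂F)_n / #F_n`, which tends to `0` along `(n_k)` since `∂F` has density
zero and `F` positive lower density. Bounded continuous functions determine finite Borel measures
on a metric space, whence `T_* ν = ν`; testing against `1` gives `ν(X) = 1`.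
-/

lemma norm_sum_shift_sub_sum_le {E : Type*} [SeminormedAddCommGroup E] (A : Finset ℕ)
    {a : ℕ → E} {C : ℝ} (ha : ∀ j, ‖a j‖ ≤ C) :
    ‖∑ j ∈ A, a (j + 1) - ∑ j ∈ A, a j‖ ≤ 2 * C * (A \ A.image (· + 1)).card := by
  set B := A.image (· + 1)
  have hcard : (B \ A).card = (A \ B).card :=
    Finset.card_sdiff_comm (Finset.card_image_of_injective A (add_left_injective 1))
  have hsum : ∀ s : Finset ℕ, ‖∑ j ∈ s, a j‖ ≤ C * s.card := fun s =>
    (norm_sum_le_of_le s fun j _ => ha j).trans_eq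
      (by rw [Finset.sum_const, nsmul_eq_mul, mul_comm])
  rw [← Finset.sum_image (g := (· + 1)) fun _ _ _ _ h => add_right_cancel h,
    ← Finset.sum_sdiff_sub_sum_sdiff]
  calc ‖∑ j ∈ B \ A, a j - ∑ j ∈ A \ B, a j‖
      ≤ C * (B \ A).card + C * (A \ B).card :=
        (norm_sub_le _ _).trans (add_le_add (hsum _) (hsum _))
    _ = 2 * C * (A \ B).card := by rw [hcard]; ring

lemma mem_sec {E : Set ℕ} {n k : ℕ} : k ∈ sec E n ↔ k < n ∧ k ∈ E := by
  simp [sec]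

lemma sec_sdiff_image_succ_subset (F : Set ℕ) (n : ℕ) :
    sec F n \ (sec F n).image (· + 1) ⊆ sec (bdry F) n := by
  intro j hj
  obtain ⟨hjF, hjB⟩ := Finset.mem_sdiff.1 hj
  obtain ⟨hjn, hj⟩ := mem_sec.1 hjF
  refine mem_sec.2 ⟨hjn, hj, ?_⟩
  rcases j with _ | i
  · exact Or.inr (Or.inl rfl)
  · exact Or.inr (Or.inr fun hi => hjB (Finset.mem_image.2 ⟨i, mem_sec.2 ⟨by omega, hi⟩, rfl⟩))

lemma norm_sum_sec_shift_sub_sum_le {E : Type*} [SeminormedAddCommGroup E] (F : Set ℕ) (n : ℕ)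
    {a : ℕ → E} {C : ℝ} (ha : ∀ j, ‖a j‖ ≤ C) :
    ‖∑ j ∈ sec F n, a (j + 1) - ∑ j ∈ sec F n, a j‖ ≤ 2 * C * secCard (bdry F) n := by
  have hC : 0 ≤ C := (norm_nonneg _).trans (ha 0)
  refine (norm_sum_shift_sub_sum_le _ ha).trans ?_
  gcongr
  exact Finset.card_le_card (sec_sdiff_image_succ_subset F n)

open scoped BoundedContinuousFunction

section AveragedMeasures

variable {X : Type*} [TopologicalSpace X] [MeasurableSpace X] [BorelSpace X]
  {T : X → X} (hT : Continuous T) (F : Set ℕ) (ρ : Measure X) [IsProbabilityMeasure ρ] (n : ℕ)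
include hT

lemma isProbabilityMeasure_avgMeas (hF : 0 < secCard F n) :
    IsProbabilityMeasure (avgMeas T F ρ n) := by
  have hmap : ∀ j ∈ sec F n, Measure.map (T^[j]) ρ univ = 1 := fun j _ => by
    simp [Measure.map_apply (hT.measurable.iterate j) MeasurableSet.univ]
  constructor
  rw [avgMeas, Measure.smul_apply, Measure.finsetSum_apply, Finset.sum_congr rfl hmap,
    Finset.sum_const, nsmul_eq_mul, mul_one, smul_eq_mul, secCard]
  exact ENNReal.inv_mul_cancel (by exact_mod_cast hF.ne') (ENNReal.natCast_ne_top _)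

lemma integral_avgMeas (g : X →ᵇ ℝ) :
    ∫ x, g x ∂(avgMeas T F ρ n) = (secCard F n : ℝ)⁻¹ * ∑ j ∈ sec F n, ∫ x, g (T^[j] x) ∂ρ := by
  have hTj : ∀ j, AEMeasurable (T^[j]) ρ := fun j => (hT.measurable.iterate j).aemeasurable
  rw [avgMeas, integral_smul_measure, integral_finsetSum_measure fun j _ => g.integrable _,
    ENNReal.toReal_inv, ENNReal.toReal_natCast, smul_eq_mul]
  congr 1
  exact Finset.sum_congr rfl fun j _ => integral_map (hTj j) g.continuous.aestronglyMeasurable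

lemma abs_integral_comp_sub_integral_avgMeas_le (g : X →ᵇ ℝ) :
    |∫ x, g (T x) ∂(avgMeas T F ρ n) - ∫ x, g x ∂(avgMeas T F ρ n)|
      ≤ 2 * ‖g‖ * secCard (bdry F) n / secCard F n := by
  have hbound : ∀ j, ‖∫ x, g (T^[j] x) ∂ρ‖ ≤ ‖g‖ := fun j => by
    simpa using norm_integral_le_of_norm_le_const (μ := ρ)
      (Eventually.of_forall fun x => g.norm_coe_le_norm (T^[j] x))
  have hshift := norm_sum_sec_shift_sub_sum_le F n hbound
  simp only [Function.iterate_succ_apply', Real.norm_eq_abs] at hshift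
  have hcomp := integral_avgMeas hT F ρ n (g.compContinuous ⟨T, hT⟩)
  simp only [BoundedContinuousFunction.compContinuous_apply, ContinuousMap.coe_mk] at hcomp
  rw [hcomp, integral_avgMeas hT, ← mul_sub,
    abs_mul, abs_inv, Nat.abs_cast, div_eq_inv_mul]
  exact mul_le_mul_of_nonneg_left hshift (by positivity)

end AveragedMeasures

lemma secCard_div_nonneg (E : Set ℕ) (n : ℕ) : 0 ≤ (secCard E n : ℝ) / n := by positivity

lemma secCard_div_le_one (E : Set ℕ) (n : ℕ) : (secCard E n : ℝ) / n ≤ 1 :=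
  div_le_one_of_le₀ (by exact_mod_cast (Finset.card_filter_le _ _).trans_eq (Finset.card_range n))
    n.cast_nonneg

section Densities

variable {E : Set ℕ} {nk : ℕ → ℕ}

lemma tendsto_secCard_div_of_upDensAlong_eq_zero (h : upDensAlong E nk = 0) :
    Tendsto (fun k => (secCard E (nk k) : ℝ) / nk k) atTop (𝓝 0) := by
  refine tendsto_order.2 ⟨fun a ha => .of_forall fun k => ha.trans_le (secCard_div_nonneg _ _),
    fun b hb => eventually_lt_of_limsup_lt (h.trans_lt hb) ?_⟩
  exact isBoundedUnder_of_eventually_le (.of_forall fun _ => secCard_div_le_one _ _)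

lemma eventually_lt_secCard_div_of_lt_loDensAlong {c : ℝ} (h : c < loDensAlong E nk) :
    ∀ᶠ k in atTop, c < (secCard E (nk k) : ℝ) / nk k :=
  eventually_lt_of_lt_liminf h (isBoundedUnder_of_eventually_ge (.of_forall fun _ =>
    secCard_div_nonneg _ _))

lemma eventually_secCard_pos_of_loDensAlong_pos (h : 0 < loDensAlong E nk) :
    ∀ᶠ k in atTop, 0 < secCard E (nk k) :=
  (eventually_lt_secCard_div_of_lt_loDensAlong h).mono fun k hk =>
    Nat.pos_of_ne_zero fun h0 => by simp [h0] at hk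

lemma FolnerAlong.tendsto_secCard_bdry_div_secCard {F : Set ℕ} (hF : FolnerAlong F nk)
    (hdens : 0 < loDensAlong F nk) :
    Tendsto (fun k => (secCard (bdry F) (nk k) : ℝ) / secCard F (nk k)) atTop (𝓝 0) := by
  set c := loDensAlong F nk / 2
  have hc : 0 < c := half_pos hdens
  refine squeeze_zero' (.of_forall fun k => by positivity) ?_
    (by simpa using (tendsto_secCard_div_of_upDensAlong_eq_zero hF).div_const c)
  filter_upwards [eventually_lt_secCard_div_of_lt_loDensAlong (half_lt_self hdens)] with k hk
  have hn : (nk k : ℝ) ≠ 0 := fun h0 => by simp [h0] at hk; linarith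
  calc (secCard (bdry F) (nk k) : ℝ) / secCard F (nk k)
      = (secCard (bdry F) (nk k) / nk k) / (secCard F (nk k) / nk k) :=
        (div_div_div_cancel_right₀ hn _ _).symm
    _ ≤ (secCard (bdry F) (nk k) / nk k) / c :=
        div_le_div_of_nonneg_left (secCard_div_nonneg _ _) hc hk.le

end Densities

lemma tendsto_integral_comp_sub_integral_avgMeas {X : Type*} [TopologicalSpace X]
    [MeasurableSpace X] [BorelSpace X] {T : X → X} (hT : Continuous T) {nk : ℕ → ℕ} {F : Set ℕ}
    (hF : FolnerAlong F nk) (hdens : 0 < loDensAlong F nk) (μ : ℕ → Measure X)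
    [∀ k, IsProbabilityMeasure (μ k)] (g : X →ᵇ ℝ) :
    Tendsto (fun k => ∫ x, g (T x) ∂(avgMeas T F (μ k) (nk k))
      - ∫ x, g x ∂(avgMeas T F (μ k) (nk k))) atTop (𝓝 0) :=
  squeeze_zero_norm (fun k => abs_integral_comp_sub_integral_avgMeas_le hT F (μ k) (nk k) g)
    (by simpa [mul_div_assoc] using (hF.tendsto_secCard_bdry_div_secCard hdens).const_mul (2 * ‖g‖))

namespace WeakClusterPt

variable {X : Type*} [TopologicalSpace X] [MeasurableSpace X] {ν : Measure X} {s : ℕ → Measure X}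

lemma isProbabilityMeasure (hν : WeakClusterPt ν s)
    (hs : ∀ᶠ k in atTop, IsProbabilityMeasure (s k)) : IsProbabilityMeasure ν := by
  obtain ⟨φ, hφ, hconv⟩ := hν
  have hmass : Tendsto (fun k => (s (φ k)).real univ) atTop (𝓝 (ν.real univ)) := by
    simpa using hconv 1
  have hone : Tendsto (fun k => (s (φ k)).real univ) atTop (𝓝 1) :=
    tendsto_const_nhds.congr' ((hφ.tendsto_atTop.eventually hs).mono fun k hk => probReal_univ.symm)
  have hν1 : (ν univ).toReal = 1 := tendsto_nhds_unique hmass hone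
  exact ⟨(ENNReal.toReal_eq_one_iff _).1 hν1⟩

lemma integral_comp_eq [OpensMeasurableSpace X] (hν : WeakClusterPt ν s) {T : X → X}
    (hT : Continuous T) (g : X →ᵇ ℝ)
    (hs : Tendsto (fun k => ∫ x, g (T x) ∂(s k) - ∫ x, g x ∂(s k)) atTop (𝓝 0)) :
    ∫ x, g (T x) ∂ν = ∫ x, g x ∂ν := by
  obtain ⟨φ, hφ, hconv⟩ := hν
  refine sub_eq_zero.1 (tendsto_nhds_unique ?_ (hs.comp hφ.tendsto_atTop))
  exact (hconv (g.compContinuous ⟨T, hT⟩).toContinuousMap).sub (hconv g.toContinuousMap)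

end WeakClusterPt

lemma map_eq_self_of_integral_comp_eq {X : Type*} [TopologicalSpace X] [HasOuterApproxClosed X]
    [MeasurableSpace X] [BorelSpace X] {T : X → X} (hT : Continuous T) (ν : Measure X)
    [IsFiniteMeasure ν] (h : ∀ g : X →ᵇ ℝ, ∫ x, g (T x) ∂ν = ∫ x, g x ∂ν) :
    Measure.map T ν = ν :=
  ext_of_forall_integral_eq_of_IsFiniteMeasure fun g => by
    rw [integral_map hT.aemeasurable g.continuous.aestronglyMeasurable, h]

theorem folner_cluster_points_invariant_general {X : Type*} [MetricSpace X]
    [MeasurableSpace X] [BorelSpace X]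
    (T : X → X) (hT : Continuous T)
    (nk : ℕ → ℕ)
    (F : Set ℕ) (hFol : FolnerAlong F nk) (hdens : 0 < loDensAlong F nk)
    (μ : ℕ → Measure X) (hμ : ∀ k, IsProbabilityMeasure (μ k))
    (ν : Measure X)
    (hcl : WeakClusterPt ν (fun k => avgMeas T F (μ k) (nk k))) :
    IsProbabilityMeasure ν ∧ Measure.map T ν = ν := by
  have hprob : IsProbabilityMeasure ν := hcl.isProbabilityMeasure <|
    (eventually_secCard_pos_of_loDensAlong_pos hdens).mono fun k hk =>
      isProbabilityMeasure_avgMeas hT F (μ k) (nk k) hk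
  exact ⟨hprob, map_eq_self_of_integral_comp_eq hT ν fun g =>
    hcl.integral_comp_eq hT g (tendsto_integral_comp_sub_integral_avgMeas hT hFol hdens μ g)⟩

/-- Let `X` be a compact metric space, `T : X → X` continuous, `(n_k)` a
strictly increasing sequence of naturals, and `F ⊆ ℕ` a Fölner set along `(n_k)` with
positive lower asymptotic density along `(n_k)`. Then for any family `(μ_{n_k})` of Borel
probability measures on `X`, every weak* cluster point of
`μ_{n_k}^{F_{n_k}} = (1/#F_{n_k}) ∑_{j ∈ F_{n_k}} T^j_* μ_{n_k}` is a `T`-invariant Borel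
probability measure. -/
theorem folner_cluster_points_invariant {X : Type*} [MetricSpace X] [CompactSpace X]
    [MeasurableSpace X] [BorelSpace X]
    (T : X → X) (hT : Continuous T)
    (nk : ℕ → ℕ) (hnk : StrictMono nk)
    (F : Set ℕ) (hFol : FolnerAlong F nk) (hdens : 0 < loDensAlong F nk)
    (μ : ℕ → Measure X) (hμ : ∀ k, IsProbabilityMeasure (μ k))
    (ν : Measure X) (hfin : IsFiniteMeasure ν)
    (hcl : WeakClusterPt ν (fun k => avgMeas T F (μ k) (nk k))) :
    IsProbabilityMeasure ν ∧ Measure.map T ν = ν :=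
  folner_cluster_points_invariant_general T hT nk F hFol hdens μ hμ ν hcl
end
end

section
/- Let r ≥ 2 and let γ:[−1,1]→ℝ² be a nonconstant C^r curve which is bounded in the sense that max_{2≤s≤r} sup_t ‖γ^{(s)}(t)‖ ≤ (1/6) sup_t ‖γ'(t)‖. Then: (i) γ has bounded distortion, i.e. ‖γ'(t)‖/‖γ'(s)‖ ≤ 3/2 for all t,s∈[−1,1] (in particular γ' never vanishes); and (ii) the tangent direction oscillates slowly, i.e. the angle between γ'(t) and γ'(s) is at most π/6 for all t,s∈[−1,1]. -/
open Set

noncomputable section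

/-- The plane `ℝ²` with the Euclidean norm. -/
abbrev V2 : Type := EuclideanSpace ℝ (Fin 2)

/-- `‖dγ‖_∞`: the supremum of `‖γ'(t)‖` over `t ∈ [-1,1]`. -/
def supd (γ : ℝ → V2) : ℝ := ⨆ t : Set.Icc (-1 : ℝ) 1, ‖deriv γ (t : ℝ)‖

/-!
Let `M = sup ‖γ'‖`, attained at some `t₀`. As `‖γ''‖ ≤ M / 6` on an interval of length `2`,
`γ'` moves by at most `M / 3`, so `‖γ'‖ ≥ 2M / 3` everywhere, and `M > 0` because `γ` is not
constant. This gives the distortion bound, and it puts every `γ'(s)` within `‖γ'(t)‖ / 2` of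
`γ'(t)`, hence at angle at most `arcsin (1 / 2) = π / 6` from it.
-/

theorem InnerProductGeometry.angle_le_pi_div_six_of_two_mul_norm_sub_le {E : Type*}
    [NormedAddCommGroup E] [InnerProductSpace ℝ E] {u w : E} (hu : u ≠ 0)
    (h : 2 * ‖u - w‖ ≤ ‖u‖) : angle u w ≤ Real.pi / 6 := by
  have hu' : 0 < ‖u‖ := norm_pos_iff.mpr hu
  have hw' : 0 < ‖w‖ := by
    by_contra! hw
    rw [norm_le_zero_iff.mp hw, sub_zero] at h
    linarith
  have hsqrt3 : Real.sqrt 3 ^ 2 = 3 := Real.sq_sqrt (by norm_num)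
  -- as `4 ‖u - w‖² ≤ ‖u‖²`: `‖u‖² + ‖w‖² - ‖u - w‖² - √3 ‖u‖ ‖w‖ ≥ (‖w‖ - √3 / 2 ‖u‖)²`
  have hinner : Real.sqrt 3 / 2 * (‖u‖ * ‖w‖) ≤ inner ℝ u w := by
    nlinarith [norm_sub_sq_real u w, sq_nonneg (‖w‖ - Real.sqrt 3 / 2 * ‖u‖), norm_nonneg (u - w)]
  calc angle u w ≤ Real.arccos (Real.cos (Real.pi / 6)) := by
        rw [Real.cos_pi_div_six, angle]
        exact Real.arccos_le_arccos ((le_div_iff₀ (by positivity)).mpr hinner)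
    _ = Real.pi / 6 := Real.arccos_cos (by positivity) (by linarith [Real.pi_pos])

theorem norm_image_sub_le_of_norm_deriv_le_Icc {E : Type*} [NormedAddCommGroup E]
    [NormedSpace ℝ E] {f : ℝ → E} {a b C : ℝ} (hf : Differentiable ℝ f)
    (hC : ∀ x ∈ Icc a b, ‖deriv f x‖ ≤ C) {t s : ℝ} (ht : t ∈ Icc a b) (hs : s ∈ Icc a b) :
    ‖f t - f s‖ ≤ C * (b - a) := by
  have hts : ‖t - s‖ ≤ b - a := by
    rw [Real.norm_eq_abs, abs_le]
    constructor <;> linarith [ht.1, ht.2, hs.1, hs.2]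
  have hC0 : 0 ≤ C := (norm_nonneg _).trans (hC t ht)
  calc ‖f t - f s‖ ≤ C * ‖t - s‖ :=
        (convex_Icc a b).norm_image_sub_le_of_norm_deriv_le (fun x _ => hf x) hC hs ht
    _ ≤ C * (b - a) := by gcongr

section supd

variable {γ : ℝ → V2}

theorem norm_deriv_le_supd (hγ : Continuous (deriv γ)) {t : ℝ} (ht : t ∈ Icc (-1 : ℝ) 1) :
    ‖deriv γ t‖ ≤ supd γ :=
  le_ciSup (isCompact_range (hγ.norm.comp continuous_subtype_val)).bddAbove
    (⟨t, ht⟩ : Icc (-1 : ℝ) 1)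

theorem exists_norm_deriv_eq_supd (hγ : Continuous (deriv γ)) :
    ∃ t₀ ∈ Icc (-1 : ℝ) 1, ‖deriv γ t₀‖ = supd γ := by
  obtain ⟨t₀, ht₀, hmax⟩ := (isCompact_Icc (a := -1) (b := 1)).exists_isMaxOn (by norm_num)
    hγ.norm.continuousOn
  have : Nonempty (Icc (-1 : ℝ) 1) := ⟨⟨t₀, ht₀⟩⟩
  exact ⟨t₀, ht₀, le_antisymm (norm_deriv_le_supd hγ ht₀) (ciSup_le fun t => hmax t.2)⟩

theorem supd_pos (hγ : Differentiable ℝ γ) (hγ' : Continuous (deriv γ))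
    (hnc : ∃ t ∈ Icc (-1 : ℝ) 1, ∃ s ∈ Icc (-1 : ℝ) 1, γ t ≠ γ s) : 0 < supd γ := by
  obtain ⟨t, ht, s, hs, hts⟩ := hnc
  by_contra! hM
  have := norm_image_sub_le_of_norm_deriv_le_Icc hγ
    (fun x hx => norm_deriv_le_supd hγ' hx) ht hs
  exact hts (sub_eq_zero.mp (norm_le_zero_iff.mp (by nlinarith)))

end supd

/-- Let `r ≥ 2` and let `γ : [-1,1] → ℝ²` be a nonconstant `C^r` curve
which is bounded in the sense that `max_{2 ≤ s ≤ r} ‖d^s γ‖_∞ ≤ (1/6) ‖dγ‖_∞`. Then: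
(i) `γ` has bounded distortion, `‖γ'(t)‖/‖γ'(s)‖ ≤ 3/2` for all `t, s ∈ [-1,1]` (in
particular `γ'` never vanishes there); and (ii) the tangent direction oscillates slowly:
the angle between `γ'(t)` and `γ'(s)` is at most `π/6` for all `t, s ∈ [-1,1]`. -/
theorem bounded_curve_distortion_and_angle (r : ℕ) (hr : 2 ≤ r)
    (γ : ℝ → V2) (hγ : ContDiff ℝ r γ)
    (hnc : ∃ t ∈ Set.Icc (-1 : ℝ) 1, ∃ s ∈ Set.Icc (-1 : ℝ) 1, γ t ≠ γ s)
    (hbd : ∀ s : ℕ, 2 ≤ s → s ≤ r → ∀ t ∈ Set.Icc (-1 : ℝ) 1,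
      ‖iteratedDeriv s γ t‖ ≤ (1 / 6) * supd γ) :
    (∀ t ∈ Set.Icc (-1 : ℝ) 1, ∀ s ∈ Set.Icc (-1 : ℝ) 1,
      deriv γ s ≠ 0 ∧ ‖deriv γ t‖ ≤ (3 / 2) * ‖deriv γ s‖) ∧
    (∀ t ∈ Set.Icc (-1 : ℝ) 1, ∀ s ∈ Set.Icc (-1 : ℝ) 1,
      InnerProductGeometry.angle (deriv γ t) (deriv γ s) ≤ Real.pi / 6) := by
  have hγ2 : ContDiff ℝ 2 γ := hγ.of_le (by exact_mod_cast hr)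
  have hγ' : Continuous (deriv γ) := hγ2.continuous_deriv (by norm_num)
  obtain ⟨t₀, ht₀, hmax⟩ := exists_norm_deriv_eq_supd hγ'
  have hM : 0 < supd γ := supd_pos (hγ2.differentiable two_ne_zero) hγ' hnc
  have hosc : ∀ t ∈ Icc (-1 : ℝ) 1, ∀ s ∈ Icc (-1 : ℝ) 1,
      ‖deriv γ t - deriv γ s‖ ≤ supd γ / 3 := fun t ht s hs => by
    have := norm_image_sub_le_of_norm_deriv_le_Icc hγ2.differentiable_deriv_two
      (fun x hx => by simpa [iteratedDeriv_succ] using hbd 2 le_rfl hr x hx) ht hs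
    linarith
  have hlow : ∀ s ∈ Icc (-1 : ℝ) 1, 2 * supd γ / 3 ≤ ‖deriv γ s‖ := fun s hs => by
    linarith [hosc t₀ ht₀ s hs, norm_sub_norm_le (deriv γ t₀) (deriv γ s)]
  have hne : ∀ s ∈ Icc (-1 : ℝ) 1, deriv γ s ≠ 0 := fun s hs h => by
    linarith [hlow s hs, h ▸ norm_zero (E := V2)]
  refine ⟨fun t ht s hs => ⟨hne s hs, ?_⟩, fun t ht s hs =>
    InnerProductGeometry.angle_le_pi_div_six_of_two_mul_norm_sub_le (hne t ht) ?_⟩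
  · linarith [norm_deriv_le_supd hγ' ht, hlow s hs]
  · linarith [hosc t ht s hs, hlow t ht]

end
end
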